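/- arXiv:0807.2810 — 3 statements merged into one kernel-verified Lean document; each statement's English description precedes it below -/
import Mathlib

section
/- Let B be a boundary for a real Banach space X. If a bounded sequence (x_n) is Cauchy in the topology σ(X,B) of pointwise convergence on B and is weakly Cauchy, and converges pointwise on B to some x ∈ X, then (x_n) converges weakly to x. -/
open Filter Topology

variable {X : Type*} [NormedAddCommGroup X] [NormedSpace ℝ X]

/-- James constant of a bounded sequence. -/
noncomputable def epsJ (x : ℕ → X) : ℝ :=
  ⨆ m : ℕ, sInf {r : ℝ | ∃ α : ℕ →₀ ℝ, (∀ n < m, α n = 0) ∧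
    (∑ n ∈ α.support, |α n|) = 1 ∧ r = ‖∑ n ∈ α.support, α n • x n‖}

/-- Oscillation modulus with respect to a set of functionals. -/
noncomputable def deltaD (D : Set (X →L[ℝ] ℝ)) (x : ℕ → X) : ℝ :=
  sSup {r : ℝ | ∃ f ∈ D, r = Filter.limsup (fun n => f (x n)) Filter.atTop
    - Filter.liminf (fun n => f (x n)) Filter.atTop}

/-- Oscillation modulus with respect to the dual unit ball. -/
noncomputable def delta (x : ℕ → X) : ℝ := deltaD {f : X →L[ℝ] ℝ | ‖f‖ ≤ 1} x

/-- Hagler-Johnson modulus. -/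
noncomputable def deltaHJ (x : ℕ → X) : ℝ :=
  sSup {r : ℝ | ∃ f : X →L[ℝ] ℝ, ‖f‖ ≤ 1 ∧
    r = Filter.limsup (fun n => f (x n)) Filter.atTop}

/-- Sup of James constants over subsequences. -/
noncomputable def tildeEpsJ (x : ℕ → X) : ℝ :=
  sSup {r : ℝ | ∃ φ : ℕ → ℕ, StrictMono φ ∧ r = epsJ (x ∘ φ)}

/-- Inf of δ over subsequences. -/
noncomputable def tildeDelta (x : ℕ → X) : ℝ :=
  sInf {r : ℝ | ∃ φ : ℕ → ℕ, StrictMono φ ∧ r = delta (x ∘ φ)}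

/-- `B` is a boundary: a subset of the dual unit sphere on which every element
of `X` attains its norm. -/
def IsBoundary (B : Set (X →L[ℝ] ℝ)) : Prop :=
  (∀ b ∈ B, ‖b‖ = 1) ∧ ∀ x : X, ∃ b ∈ B, b x = ‖x‖

/-- `x` is equivalent to the canonical `ℓ¹` basis (lower estimate; the upper
estimate follows from boundedness). -/
def IsL1Seq (x : ℕ → X) : Prop :=
  ∃ c > (0:ℝ), ∀ α : ℕ →₀ ℝ,
    c * (∑ n ∈ α.support, |α n|) ≤ ‖∑ n ∈ α.support, α n • x n‖

/-- norm-bounded sequence -/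
def BoundedSeq (x : ℕ → X) : Prop := ∃ C : ℝ, ∀ n, ‖x n‖ ≤ C

/-- weakly Cauchy sequence -/
def WeaklyCauchy (x : ℕ → X) : Prop :=
  ∀ f : X →L[ℝ] ℝ, ∃ l : ℝ, Filter.Tendsto (fun n => f (x n)) Filter.atTop (nhds l)

/-- the topology `σ(X,B)` of pointwise convergence on `B` -/
def Btop (B : Set (X →L[ℝ] ℝ)) : TopologicalSpace X :=
  TopologicalSpace.induced (fun x : X => fun b : B => (b : X →L[ℝ] ℝ) x) Pi.topologicalSpace

/-- the weak topology `σ(X,X*)` -/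
noncomputable def weakTop (X : Type*) [NormedAddCommGroup X] [NormedSpace ℝ X] :
    TopologicalSpace X :=
  TopologicalSpace.induced (fun x : X => fun f : X →L[ℝ] ℝ => f x) Pi.topologicalSpace

/-!
Rainwater's theorem, via Simons' argument. With `z n = x n - x₀`, suppose `g (z n) ≥ ε` along a
subsequence; then the closed convex hull of that subsequence stays at norm `≥ r > 0`. Choose
greedily `w k` in the closed convex hull `K k` of the `k`-th tail so that
`‖∑_{j<k} 2⁻⁽ʲ⁺¹⁾ w j + 2⁻ᵏ w k‖` is nearly minimal, and let `b ∈ B` attain the norm of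
`∑ 2⁻⁽ʲ⁺¹⁾ w j`. Near-minimality, tested against the dyadic mean `m k ∈ K k` of the tail
`(w j)_{j ≥ k}`, keeps `b (m k) > r - ε`; so `b` cannot stay `≤ r - ε` on any tail of the
subsequence, contradicting `b (z n) → 0`.
-/

open Set

theorem exists_mem_forall_lt_add {α : Type*} {f : α → ℝ} {s : Set α} (hs : s.Nonempty)
    (hf : BddBelow (f '' s)) {δ : ℝ} (hδ : 0 < δ) : ∃ a ∈ s, ∀ a' ∈ s, f a < f a' + δ := by
  obtain ⟨_, ⟨a, ha, rfl⟩, hlt⟩ :=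
    exists_lt_of_csInf_lt (hs.image f) (lt_add_of_pos_right (sInf (f '' s)) hδ)
  exact ⟨a, ha, fun a' ha' => hlt.trans_le (by gcongr; exact csInf_le hf ⟨a', ha', rfl⟩)⟩

theorem Convex.tsum_smul_mem {E : Type*} [AddCommGroup E] [Module ℝ E] [TopologicalSpace E]
    [ContinuousSMul ℝ E] {K : Set E} (hK : Convex ℝ K) (hKc : IsClosed K) {c : ℕ → ℝ}
    {w : ℕ → E} (hc0 : ∀ j, 0 ≤ c j) (hc1 : HasSum c 1) (hcw : Summable fun j => c j • w j)
    (hw : ∀ j, w j ∈ K) : ∑' j, c j • w j ∈ K := by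
  have hmass := hc1.tendsto_sum_nat
  have hcenter : Tendsto (fun n => (Finset.range n).centerMass c w) atTop
      (𝓝 ((1 : ℝ)⁻¹ • ∑' j, c j • w j)) :=
    (hmass.inv₀ one_ne_zero).smul hcw.hasSum.tendsto_sum_nat
  rw [inv_one, one_smul] at hcenter
  refine hKc.mem_of_tendsto hcenter ?_
  filter_upwards [hmass.eventually (lt_mem_nhds zero_lt_one)] with n hn
  exact hK.centerMass_mem (fun j _ => hc0 j) hn (fun j _ => hw j)

noncomputable def dyadicMean (w : ℕ → X) : X := ∑' j, (2⁻¹ : ℝ) ^ (j + 1) • w j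

noncomputable def dyadicPartialSum (w : ℕ → X) (k : ℕ) : X :=
  ∑ j ∈ Finset.range k, (2⁻¹ : ℝ) ^ (j + 1) • w j

theorem hasSum_two_inv_pow_succ : HasSum (fun j : ℕ => (2⁻¹ : ℝ) ^ (j + 1)) 1 := by
  convert hasSum_geometric_two' 1 using 2 with j
  rw [pow_succ', inv_pow]
  ring

theorem BoundedSeq.summable_two_inv_pow_succ_smul [CompleteSpace X] {w : ℕ → X}
    (hw : BoundedSeq w) : Summable fun j => (2⁻¹ : ℝ) ^ (j + 1) • w j := by
  obtain ⟨C, hC⟩ := hw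
  refine (hasSum_two_inv_pow_succ.summable.mul_right C).of_norm_bounded fun j => ?_
  rw [norm_smul, Real.norm_of_nonneg (by positivity)]
  exact mul_le_mul_of_nonneg_left (hC j) (by positivity)

theorem BoundedSeq.comp {E : Type*} [NormedAddCommGroup E] {w : ℕ → E} (hw : BoundedSeq w)
    (φ : ℕ → ℕ) : BoundedSeq (w ∘ φ) :=
  let ⟨C, hC⟩ := hw; ⟨C, fun j => hC (φ j)⟩

theorem dyadicMean_mem [CompleteSpace X] {K : Set X} (hK : Convex ℝ K) (hKc : IsClosed K)
    {w : ℕ → X} (hw : BoundedSeq w) (hwK : ∀ j, w j ∈ K) : dyadicMean w ∈ K :=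
  hK.tsum_smul_mem hKc (fun _ => by positivity) hasSum_two_inv_pow_succ
    hw.summable_two_inv_pow_succ_smul hwK

theorem dyadicMean_eq_smul_add [CompleteSpace X] {w : ℕ → X} (hw : BoundedSeq w) :
    dyadicMean w = (2⁻¹ : ℝ) • (w 0 + dyadicMean fun j => w (j + 1)) := by
  rw [dyadicMean, hw.summable_two_inv_pow_succ_smul.tsum_eq_zero_add, dyadicMean, smul_add,
    ← tsum_const_smul'']
  simp only [zero_add, pow_one, smul_smul, ← pow_succ']

theorem dyadicMean_comp_add_eq_smul_add [CompleteSpace X] {w : ℕ → X} (hw : BoundedSeq w)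
    (k : ℕ) : (dyadicMean fun j => w (j + k)) =
      (2⁻¹ : ℝ) • (w k + dyadicMean fun j => w (j + (k + 1))) := by
  simpa only [zero_add, add_assoc, add_comm 1 k] using
    dyadicMean_eq_smul_add (w := fun j => w (j + k)) (hw.comp (· + k))

theorem dyadicMean_eq_dyadicPartialSum_add [CompleteSpace X] {w : ℕ → X} (hw : BoundedSeq w)
    (k : ℕ) :
    dyadicMean w = dyadicPartialSum w k + (2⁻¹ : ℝ) ^ k • dyadicMean fun j => w (j + k) := by
  induction k with
  | zero => simp [dyadicPartialSum]
  | succ k ih =>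
    rw [ih, dyadicMean_comp_add_eq_smul_add hw k, dyadicPartialSum, dyadicPartialSum,
      Finset.sum_range_succ, smul_smul, smul_add, add_assoc, ← pow_succ]

theorem exists_nearly_greedy_seq {K : ℕ → Set X} (hK : ∀ k, (K k).Nonempty) {δ : ℕ → ℝ}
    (hδ : ∀ k, 0 < δ k) : ∃ w : ℕ → X, (∀ k, w k ∈ K k) ∧ ∀ k, ∀ u ∈ K k,
      ‖dyadicPartialSum w k + (2⁻¹ : ℝ) ^ k • w k‖ <
        ‖dyadicPartialSum w k + (2⁻¹ : ℝ) ^ k • u‖ + δ k := by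
  have hpick (k : ℕ) (y : X) : ∃ w ∈ K k, ∀ u ∈ K k,
      ‖y + (2⁻¹ : ℝ) ^ k • w‖ < ‖y + (2⁻¹ : ℝ) ^ k • u‖ + δ k :=
    exists_mem_forall_lt_add (hK k) ⟨0, by rintro _ ⟨u, -, rfl⟩; positivity⟩ (hδ k)
  choose pick hpickK hpick using hpick
  let y : ℕ → X := fun k => Nat.rec 0 (fun k yk => yk + (2⁻¹ : ℝ) ^ (k + 1) • pick k yk) k
  have hy (k : ℕ) : y k = dyadicPartialSum (fun j => pick j (y j)) k := by
    induction k with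
    | zero => rfl
    | succ k ih => rw [dyadicPartialSum, Finset.sum_range_succ, ← dyadicPartialSum, ← ih]
  exact ⟨fun k => pick k (y k), fun k => hpickK k _, fun k => hy k ▸ hpick k (y k)⟩

-- With tolerance `2⁻ᵏ · ε 2⁻⁽ᵏ⁺¹⁾` the losses `ε 2⁻⁽ᵏ⁺¹⁾` per step add up to less than `ε`.
theorem apply_tail_dyadicMean_ge [CompleteSpace X] {b : X →L[ℝ] ℝ} (hb : ‖b‖ ≤ 1) {w : ℕ → X}
    (hw : BoundedSeq w) (hbw : b (dyadicMean w) = ‖dyadicMean w‖) {ε : ℝ}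
    (hnear : ∀ k, ‖dyadicPartialSum w k + (2⁻¹ : ℝ) ^ k • w k‖ ≤
      ‖dyadicPartialSum w k + (2⁻¹ : ℝ) ^ k • dyadicMean (fun j => w (j + k))‖ +
        (2⁻¹ : ℝ) ^ k * (ε * (2⁻¹ : ℝ) ^ (k + 1))) (k : ℕ) :
    b (dyadicMean w) - ε + ε * (2⁻¹ : ℝ) ^ k ≤ b (dyadicMean fun j => w (j + k)) := by
  set m : ℕ → X := fun k => dyadicMean fun j => w (j + k)
  have hm_succ (k : ℕ) : b (m k) = 2⁻¹ * (b (w k) + b (m (k + 1))) := by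
    simp only [m, dyadicMean_comp_add_eq_smul_add hw k, map_smul, map_add, smul_eq_mul]
  have hw_le (k : ℕ) : b (w k) ≤ b (m k) + ε * (2⁻¹ : ℝ) ^ (k + 1) := by
    set y := dyadicPartialSum w k
    have hsplit : dyadicMean w = y + (2⁻¹ : ℝ) ^ k • m k :=
      dyadicMean_eq_dyadicPartialSum_add hw k
    have key : b y + (2⁻¹ : ℝ) ^ k * b (w k) ≤
        b y + (2⁻¹ : ℝ) ^ k * b (m k) + (2⁻¹ : ℝ) ^ k * (ε * (2⁻¹ : ℝ) ^ (k + 1)) :=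
      calc b y + (2⁻¹ : ℝ) ^ k * b (w k) = b (y + (2⁻¹ : ℝ) ^ k • w k) := by simp
        _ ≤ ‖y + (2⁻¹ : ℝ) ^ k • w k‖ :=
          (Real.le_norm_self _).trans ((b.le_of_opNorm_le hb _).trans_eq (one_mul _))
        _ ≤ ‖dyadicMean w‖ + (2⁻¹ : ℝ) ^ k * (ε * (2⁻¹ : ℝ) ^ (k + 1)) := hsplit ▸ hnear k
        _ = b y + (2⁻¹ : ℝ) ^ k * b (m k) + (2⁻¹ : ℝ) ^ k * (ε * (2⁻¹ : ℝ) ^ (k + 1)) := by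
          rw [← hbw, hsplit]; simp
    refine le_of_mul_le_mul_left ?_ (by positivity : (0 : ℝ) < (2⁻¹ : ℝ) ^ k)
    rw [mul_add]
    linarith
  induction k with
  | zero => simp
  | succ k ih =>
    have hw_k := hw_le k
    rw [pow_succ] at hw_k ⊢
    linarith [hm_succ k]

theorem IsBoundary.exists_mem_frequently_sub_lt [CompleteSpace X] {B : Set (X →L[ℝ] ℝ)}
    (hB : IsBoundary B) {z : ℕ → X} (hz : BoundedSeq z) {r ε : ℝ} (hε : 0 < ε)
    (hr : ∀ v ∈ closedConvexHull ℝ (range z), r ≤ ‖v‖) :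
    ∃ b ∈ B, ∃ᶠ n in atTop, r - ε < b (z n) := by
  obtain ⟨C, hC⟩ := hz
  set K : ℕ → Set X := fun k => closedConvexHull ℝ (z '' Ici k)
  have hK_anti {k j : ℕ} (hkj : k ≤ j) : K j ⊆ K k :=
    (closedConvexHull ℝ).monotone (image_mono (Ici_subset_Ici.2 hkj))
  have hK_halfSpace {b : X →L[ℝ] ℝ} {k : ℕ} {q : ℝ} (hq : ∀ n ≥ k, b (z n) ≤ q) :
      K k ⊆ {v | b v ≤ q} :=
    closedConvexHull_min (by rintro _ ⟨n, hn, rfl⟩; exact hq n hn)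
      (convex_halfSpace_le b.isLinear q) (isClosed_le b.continuous continuous_const)
  obtain ⟨w, hwK, hnear⟩ := exists_nearly_greedy_seq (K := K)
    (fun k => ⟨z k, subset_closedConvexHull ⟨k, mem_Ici.2 le_rfl, rfl⟩⟩)
    (δ := fun k => (2⁻¹ : ℝ) ^ k * (ε * (2⁻¹ : ℝ) ^ (k + 1))) (fun k => by positivity)
  have hw : BoundedSeq w := ⟨C, fun k =>
    closedConvexHull_min (by rintro _ ⟨n, -, rfl⟩; exact mem_closedBall_zero_iff.2 (hC n))
      (convex_closedBall 0 C) Metric.isClosed_closedBall (hwK k) |> mem_closedBall_zero_iff.1⟩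
  have hm_mem (k : ℕ) : (dyadicMean fun j => w (j + k)) ∈ K k :=
    dyadicMean_mem convex_closedConvexHull isClosed_closedConvexHull (hw.comp (· + k))
      (fun j => hK_anti (Nat.le_add_left k j) (hwK (j + k)))
  obtain ⟨b, hbB, hb⟩ := hB.2 (dyadicMean w)
  have hm_ge := apply_tail_dyadicMean_ge (hB.1 b hbB).le hw hb fun k => (hnear k _ (hm_mem k)).le
  have hr_le : r ≤ b (dyadicMean w) :=
    hb ▸ hr _ ((closedConvexHull ℝ).monotone (image_subset_range _ _) (hm_mem 0))
  refine ⟨b, hbB, frequently_atTop.2 fun k => ?_⟩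
  by_contra! hle
  have h_le : b (dyadicMean fun j => w (j + k)) ≤ r - ε := hK_halfSpace hle (hm_mem k)
  linarith [hm_ge k, (by positivity : 0 < ε * (2⁻¹ : ℝ) ^ k)]

theorem IsBoundary.eventually_apply_lt [CompleteSpace X] {B : Set (X →L[ℝ] ℝ)}
    (hB : IsBoundary B) {z : ℕ → X} (hz : BoundedSeq z)
    (hzB : ∀ b ∈ B, Tendsto (fun n => b (z n)) atTop (𝓝 0)) (g : X →L[ℝ] ℝ) {ε : ℝ}
    (hε : 0 < ε) : ∀ᶠ n in atTop, g (z n) < ε := by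
  by_contra h
  simp only [not_eventually, not_lt] at h
  obtain ⟨φ, hφ, hge⟩ := extraction_of_frequently_atTop h
  have hg : 0 < ‖g‖ := norm_pos_iff.2 fun hg0 => by simpa [hg0] using hε.trans_le (hge 0)
  set r := ε / ‖g‖
  have hr : ∀ v ∈ closedConvexHull ℝ (range (z ∘ φ)), r ≤ ‖v‖ := by
    intro v hv
    have hεv : ε ≤ g v := closedConvexHull_min (t := {v | ε ≤ g v}) (range_subset_iff.2 hge)
      (convex_halfSpace_ge g.isLinear ε) (isClosed_le continuous_const g.continuous) hv
    rw [div_le_iff₀ hg]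
    linarith [g.le_opNorm v, Real.le_norm_self (g v), mul_comm ‖g‖ ‖v‖]
  have hr2 : 0 < r / 2 := by positivity
  obtain ⟨b, hbB, hfreq⟩ := hB.exists_mem_frequently_sub_lt (hz.comp φ) hr2 hr
  obtain ⟨n, hn_gt, hn_lt⟩ : ∃ n, r - r / 2 < b (z (φ n)) ∧ b (z (φ n)) < r / 2 :=
    (hfreq.and_eventually (((hzB b hbB).comp hφ.tendsto_atTop).eventually
      (gt_mem_nhds hr2))).exists
  linarith

theorem IsBoundary.tendsto_apply_zero [CompleteSpace X] {B : Set (X →L[ℝ] ℝ)}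
    (hB : IsBoundary B) {z : ℕ → X} (hz : BoundedSeq z)
    (hzB : ∀ b ∈ B, Tendsto (fun n => b (z n)) atTop (𝓝 0)) (g : X →L[ℝ] ℝ) :
    Tendsto (fun n => g (z n)) atTop (𝓝 0) := by
  refine tendsto_order.2 ⟨fun a ha => ?_, fun a ha => hB.eventually_apply_lt hz hzB g ha⟩
  filter_upwards [hB.eventually_apply_lt hz hzB (-g) (neg_pos.2 ha)] with n hn
  simpa using neg_lt_neg_iff.1 (by simpa using hn)

theorem stmt12_general [CompleteSpace X] (B : Set (X →L[ℝ] ℝ)) (hB : IsBoundary B)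
    (x : ℕ → X) (hx : BoundedSeq x) (x₀ : X)
    (hBlim : ∀ b ∈ B, Filter.Tendsto (fun n => b (x n)) Filter.atTop (nhds (b x₀))) :
    ∀ f : X →L[ℝ] ℝ, Filter.Tendsto (fun n => f (x n)) Filter.atTop (nhds (f x₀)) := by
  obtain ⟨C, hC⟩ := hx
  have hz : BoundedSeq fun n => x n - x₀ :=
    ⟨C + ‖x₀‖, fun n => (norm_sub_le _ _).trans (by linarith [hC n])⟩
  have hzB (b : X →L[ℝ] ℝ) (hb : b ∈ B) : Tendsto (fun n => b (x n - x₀)) atTop (𝓝 0) := by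
    simpa using (hBlim b hb).sub_const (b x₀)
  intro f
  simpa using (hB.tendsto_apply_zero hz hzB f).add_const (f x₀)

theorem stmt12 [CompleteSpace X] (B : Set (X →L[ℝ] ℝ)) (hB : IsBoundary B)
    (x : ℕ → X) (hx : BoundedSeq x) (x₀ : X)
    (hBCauchy : ∀ b ∈ B, CauchySeq (fun n => b (x n)))
    (hwC : WeaklyCauchy x)
    (hBlim : ∀ b ∈ B, Filter.Tendsto (fun n => b (x n)) Filter.atTop (nhds (b x₀))) :
    ∀ f : X →L[ℝ] ℝ, Filter.Tendsto (fun n => f (x n)) Filter.atTop (nhds (f x₀)) :=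
  stmt12_general B hB x hx x₀ hBlim
end

section
/- Let B be a boundary for a real Banach space X and suppose a bounded sequence (x_n) in X is weakly Cauchy and B-converges to some x ∈ X. If additionally every subsequence of (x_n) contains no ℓ¹-subsequence, then (x_n) converges weakly to x. (Weak sequential completeness relative to B-limits via Simons' equality.) -/
/-!
Write `y n = x n - x₀`. By Simons' argument, if `b (y n)` has nonpositive upper limit for every
`b` in the boundary `B`, then `0` lies in the closed convex hull of every tail of `(y n)`; hence
any functional `g` satisfies `lim g (y n) ≤ 0` whenever the limit exists. Applied to `f` and `-f`
(the limit exists because `(x n)` is weakly Cauchy) this forces `lim f (x n) = f x₀`.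

To find points of small norm in the closed convex hull `W j = tailHull y j` of `{y n | n ≥ j}`, choose greedily
`v m ∈ W (m + 1)` so that `u (m + 1) = u m + 2⁻ᵐ⁻¹ v m` has nearly minimal norm, and let
`τ m = ∑ᵢ 2⁻ⁱ⁻¹ v (i + m) ∈ W (m + 1)`, so that `τ 0 = u m + 2⁻ᵐ τ m`. Comparing `u (m + 1)` with
the competitor `τ m` gives `‖u m‖ ≤ ‖τ 0‖ - 2⁻ᵐ (‖τ 0‖ - ε)`. A functional `b ∈ B` norming
`τ 0` then satisfies `b (τ m) ≥ ‖τ 0‖ - ε` for all `m`, while `b (τ m)` is eventually small since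
`τ m` lies in ever later tails; so `‖τ 0‖ ≤ ε`.
-/

open Filter Topology

variable {X : Type*} [NormedAddCommGroup X] [NormedSpace ℝ X]

open Set Finset

lemma exists_forall_le_add {α : Type*} {S : Set α} (hS : S.Nonempty) {g : α → ℝ}
    (hg : BddBelow (g '' S)) {e : ℝ} (he : 0 < e) : ∃ a ∈ S, ∀ b ∈ S, g a ≤ g b + e := by
  obtain ⟨_, ⟨a, ha, rfl⟩, hlt⟩ := Real.lt_sInf_add_pos (hS.image g) he
  exact ⟨a, ha, fun b hb => hlt.le.trans (by gcongr; exact csInf_le hg ⟨b, hb, rfl⟩)⟩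

lemma exists_seq_forall_norm_sum_le {S : ℕ → Set X} (hS : ∀ m, (S m).Nonempty) (c e : ℕ → ℝ)
    (he : ∀ m, 0 < e m) :
    ∃ v : ℕ → X, ∀ m, v m ∈ S m ∧ ∀ w ∈ S m,
      ‖∑ j ∈ range (m + 1), c j • v j‖ ≤ ‖∑ j ∈ range m, c j • v j + c m • w‖ + e m := by
  have hpick : ∀ (a : X) m, ∃ v ∈ S m, ∀ w ∈ S m, ‖a + c m • v‖ ≤ ‖a + c m • w‖ + e m :=
    fun a m => exists_forall_le_add (hS m)
      ⟨0, by rintro _ ⟨w, -, rfl⟩; exact norm_nonneg _⟩ (he m)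
  choose pick hpickS hpick using hpick
  let u : ℕ → X := fun m => Nat.rec 0 (fun m um => um + c m • pick um m) m
  have hu : ∀ m, u m = ∑ j ∈ range m, c j • pick (u j) j := by
    intro m
    induction m with
    | zero => rfl
    | succ m ih => rw [sum_range_succ, ← ih]
  refine ⟨fun m => pick (u m) m, fun m => ⟨hpickS _ _, fun w hw => ?_⟩⟩
  rw [sum_range_succ, ← hu]
  exact hpick _ _ w hw

section DyadicSeries

variable [CompleteSpace X] {v : ℕ → X} {M : ℝ}

lemma hasSum_half_pow_succ : HasSum (fun j : ℕ => (1 / 2 : ℝ) ^ (j + 1)) 1 := by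
  simpa [pow_succ, mul_comm] using hasSum_geometric_two.mul_left (1 / 2 : ℝ)

lemma summable_half_pow_succ_smul (hv : ∀ j, ‖v j‖ ≤ M) :
    Summable fun j => (1 / 2 : ℝ) ^ (j + 1) • v j :=
  (hasSum_half_pow_succ.summable.mul_right M).of_norm_bounded fun j => by
    rw [norm_smul, Real.norm_of_nonneg (by positivity)]
    exact mul_le_mul_of_nonneg_left (hv j) (by positivity)

lemma tsum_half_pow_succ_smul_mem {V : Set X} (hV : Convex ℝ V)
    (hVc : IsClosed V) (hvV : ∀ j, v j ∈ V) (hv : ∀ j, ‖v j‖ ≤ M) :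
    ∑' j, (1 / 2 : ℝ) ^ (j + 1) • v j ∈ V := by
  have hlim : Tendsto (fun m => (range m).centerMass (fun j => (1 / 2 : ℝ) ^ (j + 1)) v) atTop
      (𝓝 (∑' j, (1 / 2 : ℝ) ^ (j + 1) • v j)) := by
    simpa [Finset.centerMass] using (hasSum_half_pow_succ.tendsto_sum_nat.inv₀ one_ne_zero).smul
      (summable_half_pow_succ_smul hv).hasSum.tendsto_sum_nat
  refine hVc.mem_of_tendsto hlim (eventually_atTop.2 ⟨1, fun m hm => ?_⟩)
  refine hV.centerMass_mem (fun _ _ => by positivity) ?_ (fun j _ => hvV j)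
  exact sum_pos (fun _ _ => by positivity) (nonempty_range_iff.2 (by omega))

lemma tsum_half_pow_succ_smul_eq (hv : ∀ j, ‖v j‖ ≤ M) (m : ℕ) :
    ∑' j, (1 / 2 : ℝ) ^ (j + 1) • v j = ∑ j ∈ range m, (1 / 2 : ℝ) ^ (j + 1) • v j
      + (1 / 2 : ℝ) ^ m • ∑' i, (1 / 2 : ℝ) ^ (i + 1) • v (i + m) := by
  rw [← (summable_half_pow_succ_smul hv).sum_add_tsum_nat_add m,
    ← (summable_half_pow_succ_smul fun i => hv (i + m)).tsum_const_smul]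
  congr 2 with i
  rw [smul_smul, ← pow_add]
  ring_nf

end DyadicSeries

def tailHull (y : ℕ → X) (j : ℕ) : Set X := closure (convexHull ℝ (y '' Ici j))

section TailHull

variable (y : ℕ → X)

lemma convex_tailHull (j : ℕ) : Convex ℝ (tailHull y j) := (convex_convexHull ℝ _).closure

lemma isClosed_tailHull (j : ℕ) : IsClosed (tailHull y j) := isClosed_closure

variable {y}

lemma mem_tailHull {j n : ℕ} (h : j ≤ n) : y n ∈ tailHull y j :=
  subset_closure (subset_convexHull ℝ _ ⟨n, h, rfl⟩)

lemma tailHull_antitone : Antitone (tailHull y) := fun _ _ h =>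
  closure_mono (convexHull_mono (image_mono (Ici_subset_Ici.2 h)))

lemma tailHull_subset {S : Set X} (hS : Convex ℝ S) (hSc : IsClosed S) {j : ℕ}
    (h : ∀ n, j ≤ n → y n ∈ S) : tailHull y j ⊆ S :=
  closure_minimal (convexHull_min (by rintro _ ⟨n, hn, rfl⟩; exact h n hn) hS) hSc

end TailHull

section Greedy

variable {t : X} {u τ : ℕ → X} {ε : ℝ}

lemma half_pow_mul_add_le_of_greedy (hu0 : u 0 = 0) (hsplit : ∀ m, t = u m + (1 / 2 : ℝ) ^ m • τ m)
    (hstep : ∀ m, ‖u (m + 1)‖ ≤ ‖u m + (1 / 2 : ℝ) ^ (m + 1) • τ m‖ + ε * (1 / 4) ^ (m + 1))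
    (m : ℕ) : (1 / 2 : ℝ) ^ m * (‖t‖ - ε) + ε * (1 / 4) ^ m ≤ ‖t‖ - ‖u m‖ := by
  induction m with
  | zero => simp [hu0]
  | succ m ih =>
    have hmid : u m + (1 / 2 : ℝ) ^ (m + 1) • τ m = (1 / 2 : ℝ) • u m + (1 / 2 : ℝ) • t := by
      rw [hsplit m]
      module
    have hu : ‖u (m + 1)‖ ≤ 1 / 2 * ‖u m‖ + 1 / 2 * ‖t‖ + ε * (1 / 4) ^ (m + 1) := by
      refine (hstep m).trans ?_
      rw [hmid]
      gcongr
      refine (norm_add_le _ _).trans_eq ?_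
      simp [norm_smul]
    rw [pow_succ, pow_succ] at *
    linarith

lemma sub_le_apply_of_greedy (hu0 : u 0 = 0) (hsplit : ∀ m, t = u m + (1 / 2 : ℝ) ^ m • τ m)
    (hstep : ∀ m, ‖u (m + 1)‖ ≤ ‖u m + (1 / 2 : ℝ) ^ (m + 1) • τ m‖ + ε * (1 / 4) ^ (m + 1))
    (hε : 0 ≤ ε) {b : X →L[ℝ] ℝ} (hb : ‖b‖ ≤ 1) (hbt : b t = ‖t‖) (m : ℕ) : ‖t‖ - ε ≤ b (τ m) := by
  have hdecay := half_pow_mul_add_le_of_greedy hu0 hsplit hstep m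
  have hbu : b (u m) ≤ ‖u m‖ :=
    (le_abs_self _).trans (by simpa using b.le_of_opNorm_le hb (u m))
  have hbτ : ‖t‖ = b (u m) + (1 / 2 : ℝ) ^ m * b (τ m) := by
    conv_lhs => rw [← hbt, hsplit m]
    simp
  have : (1 / 2 : ℝ) ^ m * (‖t‖ - ε) ≤ (1 / 2 : ℝ) ^ m * b (τ m) := by
    linarith [show 0 ≤ ε * (1 / 4 : ℝ) ^ m by positivity]
  exact le_of_mul_le_mul_left this (by positivity)

end Greedy

section Simons

variable [CompleteSpace X] {B : Set (X →L[ℝ] ℝ)} {y : ℕ → X}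

theorem zero_mem_tailHull_of_isBoundary (hB : IsBoundary B) (hy : BoundedSeq y)
    (hlim : ∀ b ∈ B, ∀ δ > 0, ∀ᶠ n in atTop, b (y n) < δ) : (0 : X) ∈ tailHull y 0 := by
  suffices h : ∀ ε > 0, ∃ z ∈ tailHull y 0, ‖z‖ ≤ ε by
    refine (isClosed_tailHull y 0).closure_subset (Metric.mem_closure_iff.2 fun ε hε => ?_)
    obtain ⟨z, hz, hzε⟩ := h (ε / 2) (half_pos hε)
    exact ⟨z, hz, by rw [dist_zero_left]; linarith⟩
  intro ε hε
  obtain ⟨M, hM⟩ := hy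
  obtain ⟨v, hv⟩ := exists_seq_forall_norm_sum_le (S := fun m => tailHull y (m + 1))
    (fun m => ⟨y (m + 1), mem_tailHull le_rfl⟩) (fun j => (1 / 2 : ℝ) ^ (j + 1))
    (fun m => ε * (1 / 4) ^ (m + 1)) (fun m => by positivity)
  choose hvW hvmin using hv
  have hvM : ∀ m, ‖v m‖ ≤ M := fun m => by
    simpa using tailHull_subset (convex_closedBall 0 M) Metric.isClosed_closedBall
      (fun n _ => by simpa using hM n) (hvW m)
  set τ : ℕ → X := fun m => ∑' i, (1 / 2 : ℝ) ^ (i + 1) • v (i + m)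
  have hτW : ∀ m, τ m ∈ tailHull y (m + 1) := fun m =>
    tsum_half_pow_succ_smul_mem (convex_tailHull y _) (isClosed_tailHull y _)
      (fun i => tailHull_antitone (by omega) (hvW (i + m))) (fun i => hvM (i + m))
  have hsplit : ∀ m, τ 0 = ∑ j ∈ range m, (1 / 2 : ℝ) ^ (j + 1) • v j + (1 / 2 : ℝ) ^ m • τ m :=
    fun m => by simpa [τ] using tsum_half_pow_succ_smul_eq hvM m
  obtain ⟨b, hbB, hbτ⟩ := hB.2 (τ 0)
  have hbτ_ge := sub_le_apply_of_greedy (by simp) hsplit (fun m => hvmin m (τ m) (hτW m))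
    hε.le (hB.1 b hbB).le hbτ
  refine ⟨τ 0, tailHull_antitone (Nat.zero_le 1) (hτW 0), le_of_forall_pos_le_add fun δ hδ => ?_⟩
  obtain ⟨N, hN⟩ := eventually_atTop.1 (hlim b hbB δ hδ)
  have : b (τ N) ≤ δ := tailHull_subset (convex_halfSpace_le b.isLinear δ)
    (isClosed_le b.continuous continuous_const) (fun n hn => (hN n (by omega)).le) (hτW N)
  linarith [hbτ_ge N]

theorem le_zero_of_tendsto_of_isBoundary (hB : IsBoundary B) (hy : BoundedSeq y)
    (hlim : ∀ b ∈ B, ∀ δ > 0, ∀ᶠ n in atTop, b (y n) < δ) (g : X →L[ℝ] ℝ) {l : ℝ}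
    (hg : Tendsto (fun n => g (y n)) atTop (𝓝 l)) : l ≤ 0 := by
  refine le_of_forall_pos_le_add fun ε hε => ?_
  obtain ⟨N, hN⟩ := eventually_atTop.1 (hg.eventually_const_lt (sub_lt_self l hε))
  obtain ⟨M, hM⟩ := hy
  have h0 := zero_mem_tailHull_of_isBoundary hB ⟨M, fun n => hM (n + N)⟩
    fun b hb δ hδ => (tendsto_add_atTop_nat N).eventually (hlim b hb δ hδ)
  have : l - ε ≤ g 0 := tailHull_subset (convex_halfSpace_ge g.isLinear _)
    (isClosed_le continuous_const g.continuous) (fun n _ => (hN (n + N) (by omega)).le) h0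
  rw [map_zero] at this
  linarith

end Simons

theorem stmt15_general [CompleteSpace X] (B : Set (X →L[ℝ] ℝ)) (hB : IsBoundary B)
    (x : ℕ → X) (hx : BoundedSeq x) (x₀ : X)
    (hwC : WeaklyCauchy x)
    (hBlim : ∀ b ∈ B, Filter.Tendsto (fun n => b (x n)) Filter.atTop (nhds (b x₀))) :
    ∀ f : X →L[ℝ] ℝ, Filter.Tendsto (fun n => f (x n)) Filter.atTop (nhds (f x₀)) := by
  intro f
  obtain ⟨C, hC⟩ := hx
  obtain ⟨l, hl⟩ := hwC f
  have hy : BoundedSeq fun n => x n - x₀ :=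
    ⟨C + ‖x₀‖, fun n => (norm_sub_le _ _).trans (by linarith [hC n])⟩
  have hlim : ∀ b ∈ B, ∀ δ > 0, ∀ᶠ n in atTop, b (x n - x₀) < δ := fun b hb δ hδ => by
    simpa using ((hBlim b hb).sub_const (b x₀)).eventually_lt_const (by rwa [sub_self])
  have hle := le_zero_of_tendsto_of_isBoundary hB hy hlim f (by simpa using hl.sub_const (f x₀))
  have hge := le_zero_of_tendsto_of_isBoundary hB hy hlim (-f)
    (by simpa using (hl.sub_const (f x₀)).neg)
  rwa [show f x₀ = l by linarith]

theorem stmt15 [CompleteSpace X] (B : Set (X →L[ℝ] ℝ)) (hB : IsBoundary B)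
    (x : ℕ → X) (hx : BoundedSeq x) (x₀ : X)
    (hwC : WeaklyCauchy x)
    (hBlim : ∀ b ∈ B, Filter.Tendsto (fun n => b (x n)) Filter.atTop (nhds (b x₀)))
    (hnol1 : ∀ φ : ℕ → ℕ, StrictMono φ → ¬ IsL1Seq (x ∘ φ)) :
    ∀ f : X →L[ℝ] ℝ, Filter.Tendsto (fun n => f (x n)) Filter.atTop (nhds (f x₀)) :=
  stmt15_general B hB x hx x₀ hwC hBlim
end

section
/- Behrends' quantitative Rosenthal theorem: let (x_n) be a bounded sequence in a real Banach space with δ̃(x_n) = inf over subsequences of δ > 0. Then for every η > 0 there is a subsequence (x_{n_k}) with ε_J(x_{n_k}) > δ̃(x_n)/2 − η; in particular (x_n) has a subsequence equivalent to the ℓ¹ basis. -/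
open Filter Topology

variable {X : Type*} [NormedAddCommGroup X] [NormedSpace ℝ X]

/-
Fix `c < δ̃/2`. Every subsequence has oscillation `> 2c`, so on every infinite set of indices
some unit functional takes values above `a + c` and below `a - c` infinitely often, for some
centre `a`. Rounding the centres to a finite grid and stabilising, one centre `a` serves all
infinite subsets of a single infinite set `Z`. A diagonal argument with a pigeonhole on sign
patterns then extracts a subsequence on which every finite sign pattern is realised by a unit
functional with values beyond `a ± c`. Testing `∑ αₙ xₙ` against the functionals realising
the sign pattern of `α` and its opposite gives `2c ∑ |αₙ| ≤ 2 ‖∑ αₙ xₙ‖`.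
-/

theorem exists_infinite_forall_subset_of_finset_cover {α ι : Type*} (P : ι → Set α → Prop)
    (hP : ∀ i M M', P i M → M ⊆ M' → P i M') (S : Finset ι) :
    ∀ Z : Set α, Z.Infinite → (∀ M ⊆ Z, M.Infinite → ∃ i ∈ S, P i M) →
      ∃ i ∈ S, ∃ Z' ⊆ Z, Z'.Infinite ∧ ∀ M ⊆ Z', M.Infinite → P i M := by
  classical
  induction S using Finset.induction_on with
  | empty =>
    intro Z hZ hcover
    obtain ⟨i, hi, -⟩ := hcover Z subset_rfl hZ
    exact absurd hi (Finset.notMem_empty i)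
  | insert j S _ ih =>
    intro Z hZ hcover
    by_cases hbad : ∃ M ⊆ Z, M.Infinite ∧ ∀ M' ⊆ M, M'.Infinite → ¬ P j M'
    · obtain ⟨M, hMZ, hM, hMbad⟩ := hbad
      have hcoverM : ∀ M' ⊆ M, M'.Infinite → ∃ i ∈ S, P i M' := by
        intro M' hM'M hM'
        obtain ⟨i, hi, hPi⟩ := hcover M' (hM'M.trans hMZ) hM'
        rcases Finset.mem_insert.mp hi with rfl | hi
        · exact absurd hPi (hMbad M' hM'M hM')
        · exact ⟨i, hi, hPi⟩
      obtain ⟨i, hi, Z', hZ'M, hZ', hZ'P⟩ := ih M hM hcoverM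
      exact ⟨i, Finset.mem_insert_of_mem hi, Z', hZ'M.trans hMZ, hZ', hZ'P⟩
    · push Not at hbad
      refine ⟨j, Finset.mem_insert_self j S, Z, subset_rfl, hZ, fun M hMZ hM => ?_⟩
      obtain ⟨M', hM'M, -, hPM'⟩ := hbad M hMZ hM
      exact hP j M' M hPM' hM'M

theorem exists_seq_of_forall_exists {α : Type*} {P : α → Prop} {r : α → α → Prop}
    (h : ∀ a, P a → ∃ b, P b ∧ r a b) {a₀ : α} (h₀ : P a₀) :
    ∃ s : ℕ → α, s 0 = a₀ ∧ ∀ k, P (s k) ∧ r (s k) (s (k + 1)) := by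
  choose g hgP hgr using h
  let t : ℕ → {a // P a} := fun k => (fun a : {a // P a} => ⟨g a a.2, hgP a a.2⟩)^[k] ⟨a₀, h₀⟩
  refine ⟨fun k => (t k).1, rfl, fun k => ⟨(t k).2, ?_⟩⟩
  simp only [t, Function.iterate_succ_apply']
  exact hgr _ _

theorem le_mul_of_sign {a c t y : ℝ} (hpos : 0 < t → a + c < y) (hneg : t < 0 → y < a - c) :
    a * t + c * |t| ≤ t * y := by
  rcases lt_trichotomy t 0 with ht | rfl | ht
  · rw [abs_of_neg ht]; nlinarith [hneg ht]
  · simp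
  · rw [abs_of_pos ht]; nlinarith [hpos ht]

theorem exists_frequently_lt_of_lt_limsup_sub_liminf {u : ℕ → ℝ} {C c : ℝ}
    (hu : ∀ k, |u k| ≤ C) (hc : 2 * c < limsup u atTop - liminf u atTop) :
    ∃ a ∈ Set.Icc (-C) C, (∃ᶠ k in atTop, a + c < u k) ∧ ∃ᶠ k in atTop, u k < a - c := by
  have hle : IsBoundedUnder (· ≤ ·) atTop u :=
    isBoundedUnder_of ⟨C, fun k => (abs_le.mp (hu k)).2⟩
  have hge : IsBoundedUnder (· ≥ ·) atTop u :=
    isBoundedUnder_of ⟨-C, fun k => (abs_le.mp (hu k)).1⟩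
  have hlimsup : limsup u atTop ≤ C :=
    limsup_le_of_le hge.isCoboundedUnder_le (.of_forall fun k => (abs_le.mp (hu k)).2)
  have hliminf : -C ≤ liminf u atTop :=
    le_liminf_of_le hle.isCoboundedUnder_ge (.of_forall fun k => (abs_le.mp (hu k)).1)
  have hlim : liminf u atTop ≤ limsup u atTop := liminf_le_limsup hle hge
  refine ⟨(limsup u atTop + liminf u atTop) / 2, ⟨by linarith, by linarith⟩, ?_, ?_⟩
  · exact frequently_lt_of_lt_limsup hge.isCoboundedUnder_le (by linarith)
  · exact frequently_lt_of_liminf_lt hle.isCoboundedUnder_ge (by linarith)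

theorem abs_apply_le_of_norm_le_one {f : X →L[ℝ] ℝ} (hf : ‖f‖ ≤ 1) (v : X) : |f v| ≤ ‖v‖ :=
  (f.le_of_opNorm_le hf v).trans_eq (one_mul _)

theorem delta_nonneg {x : ℕ → X} {C : ℝ} (hC : ∀ n, ‖x n‖ ≤ C) : 0 ≤ delta x := by
  refine Real.sSup_nonneg fun r ⟨f, hf, hr⟩ => hr ▸ ?_
  have hu : ∀ n, |f (x n)| ≤ C := fun n => (abs_apply_le_of_norm_le_one hf _).trans (hC n)
  exact sub_nonneg.mpr <| liminf_le_limsup (isBoundedUnder_of ⟨C, fun n => (abs_le.mp (hu n)).2⟩)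
    (isBoundedUnder_of ⟨-C, fun n => (abs_le.mp (hu n)).1⟩)

theorem tildeDelta_le_delta_comp {x : ℕ → X} {C : ℝ} (hC : ∀ n, ‖x n‖ ≤ C) {φ : ℕ → ℕ}
    (hφ : StrictMono φ) : tildeDelta x ≤ delta (x ∘ φ) :=
  csInf_le ⟨0, fun _ ⟨ψ, _, hr⟩ => hr ▸ delta_nonneg fun n => hC (ψ n)⟩ ⟨φ, hφ, rfl⟩

theorem le_epsJ_of_forall_mul_le {w : ℕ → X} {C c : ℝ} (hC : ∀ n, ‖w n‖ ≤ C)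
    (h : ∀ α : ℕ →₀ ℝ, c * (∑ n ∈ α.support, |α n|) ≤ ‖∑ n ∈ α.support, α n • w n‖) :
    c ≤ epsJ w := by
  set S : ℕ → Set ℝ := fun m => {r : ℝ | ∃ α : ℕ →₀ ℝ, (∀ n < m, α n = 0) ∧
    (∑ n ∈ α.support, |α n|) = 1 ∧ r = ‖∑ n ∈ α.support, α n • w n‖}
  have hmem : ∀ m, ‖w m‖ ∈ S m := fun m =>
    ⟨Finsupp.single m 1, fun n hn => Finsupp.single_eq_of_ne hn.ne, by simp, by simp⟩
  have hlower : ∀ m, ∀ r ∈ S m, c ≤ r := by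
    rintro m r ⟨α, -, hα, rfl⟩
    simpa [hα] using h α
  have hbdd : BddAbove (Set.range fun m => sInf (S m)) :=
    ⟨C, by rintro r ⟨m, rfl⟩; exact (csInf_le ⟨c, hlower m⟩ (hmem m)).trans (hC m)⟩
  exact (le_csInf ⟨_, hmem 0⟩ (hlower 0)).trans (le_ciSup hbdd 0)

def OscillatesOn (x : ℕ → X) (a c : ℝ) (f : X →L[ℝ] ℝ) (M : Set ℕ) : Prop :=
  {n ∈ M | a + c < f (x n)}.Infinite ∧ {n ∈ M | f (x n) < a - c}.Infinite

namespace OscillatesOn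

variable {x : ℕ → X} {a c : ℝ} {f : X →L[ℝ] ℝ} {M : Set ℕ}

theorem mono {M' : Set ℕ} (h : OscillatesOn x a c f M) (hM : M ⊆ M') : OscillatesOn x a c f M' :=
  ⟨h.1.mono fun _ hn => ⟨hM hn.1, hn.2⟩, h.2.mono fun _ hn => ⟨hM hn.1, hn.2⟩⟩

theorem of_diff_finite {R : Set ℕ} (h : OscillatesOn x a c f M) (hfin : (M \ R).Finite) :
    OscillatesOn x a c f R :=
  ⟨(h.1.sdiff hfin).mono fun _ hn => ⟨not_not.mp fun hR => hn.2 ⟨hn.1.1, hR⟩, hn.1.2⟩,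
    (h.2.sdiff hfin).mono fun _ hn => ⟨not_not.mp fun hR => hn.2 ⟨hn.1.1, hR⟩, hn.1.2⟩⟩

theorem of_le {a' c' : ℝ} (h : OscillatesOn x a c f M) (hhi : a' + c' ≤ a + c)
    (hlo : a - c ≤ a' - c') : OscillatesOn x a' c' f M :=
  ⟨h.1.mono fun _ hn => ⟨hn.1, hhi.trans_lt hn.2⟩, h.2.mono fun _ hn => ⟨hn.1, hn.2.trans_le hlo⟩⟩

end OscillatesOn

theorem exists_oscillatesOn {x : ℕ → X} {C δ₀ c : ℝ} (hC : ∀ n, ‖x n‖ ≤ C)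
    (hδ : ∀ φ : ℕ → ℕ, StrictMono φ → δ₀ ≤ delta (x ∘ φ)) (hc : c < δ₀ / 2)
    {M : Set ℕ} (hM : M.Infinite) :
    ∃ f : X →L[ℝ] ℝ, ‖f‖ ≤ 1 ∧ ∃ a ∈ Set.Icc (-C) C, OscillatesOn x a c f M := by
  set φ := Nat.nth (· ∈ M)
  have hφ : StrictMono φ := Nat.nth_strictMono hM
  have hne : (0 : ℝ) ∈ {r : ℝ | ∃ f ∈ {f : X →L[ℝ] ℝ | ‖f‖ ≤ 1},
      r = limsup (fun n => f ((x ∘ φ) n)) atTop - liminf (fun n => f ((x ∘ φ) n)) atTop} :=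
    ⟨0, by simp, by simp⟩
  obtain ⟨r, ⟨f, hf, rfl⟩, hr⟩ :=
    exists_lt_of_lt_csSup ⟨0, hne⟩ ((by linarith : 2 * c < δ₀).trans_le (hδ φ hφ))
  obtain ⟨a, ha, hhi, hlo⟩ := exists_frequently_lt_of_lt_limsup_sub_liminf
    (fun k => (abs_apply_le_of_norm_le_one hf _).trans (hC (φ k))) hr
  have hcount {p : ℝ → Prop} (hp : ∃ᶠ k in atTop, p (f (x (φ k)))) :
      {n ∈ M | p (f (x n))}.Infinite :=
    ((Nat.frequently_atTop_iff_infinite.mp hp).image hφ.injective.injOn).mono <| by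
      rintro _ ⟨k, hk, rfl⟩
      exact ⟨Nat.nth_mem_of_infinite hM k, hk⟩
  exact ⟨f, hf, a, ha, hcount (p := (a + c < ·)) hhi, hcount (p := (· < a - c)) hlo⟩

theorem exists_infinite_forall_subset_oscillatesOn {x : ℕ → X} {C δ₀ c ε : ℝ}
    (hC : ∀ n, ‖x n‖ ≤ C) (hδ : ∀ φ : ℕ → ℕ, StrictMono φ → δ₀ ≤ delta (x ∘ φ))
    (hc : c < δ₀ / 2) (hε : 0 < ε) :
    ∃ a : ℝ, ∃ Z : Set ℕ, Z.Infinite ∧ ∀ M ⊆ Z, M.Infinite →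
      ∃ f : X →L[ℝ] ℝ, ‖f‖ ≤ 1 ∧ OscillatesOn x a (c - ε) f M := by
  -- the centres are rounded down to the finite grid `-C + i ε`, `i ≤ 2C/ε`
  let P : ℕ → Set ℕ → Prop := fun i M =>
    ∃ f : X →L[ℝ] ℝ, ‖f‖ ≤ 1 ∧ OscillatesOn x (-C + i * ε) (c - ε) f M
  have hP : ∀ i M M', P i M → M ⊆ M' → P i M' := fun _ _ _ ⟨f, hf, h⟩ hM => ⟨f, hf, h.mono hM⟩
  have hcover : ∀ M ⊆ Set.univ, M.Infinite → ∃ i ∈ Finset.range (⌊2 * C / ε⌋₊ + 1), P i M := by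
    rintro M - hM
    obtain ⟨f, hf, a, ⟨haC, haC'⟩, hosc⟩ := exists_oscillatesOn hC hδ hc hM
    have ht : 0 ≤ (a + C) / ε := div_nonneg (by linarith) hε.le
    have hlo : ⌊(a + C) / ε⌋₊ * ε ≤ a + C := (le_div_iff₀ hε).mp (Nat.floor_le ht)
    have hhi : a + C < (⌊(a + C) / ε⌋₊ + 1) * ε := (div_lt_iff₀ hε).mp (Nat.lt_floor_add_one _)
    refine ⟨⌊(a + C) / ε⌋₊, ?_, f, hf, hosc.of_le (by linarith) (by linarith)⟩
    exact Finset.mem_range_succ_iff.mpr <| Nat.floor_le_floor <| by gcongr; linarith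
  obtain ⟨i, -, Z, -, hZ, hZP⟩ :=
    exists_infinite_forall_subset_of_finset_cover P hP _ Set.univ Set.infinite_univ hcover
  exact ⟨_, Z, hZ, hZP⟩

def Realizes (x : ℕ → X) (a c : ℝ) (f : X →L[ℝ] ℝ) (F : Finset ℕ) (σ : ℕ → Bool) : Prop :=
  ∀ i ∈ F, (σ i = true → a + c < f (x i)) ∧ (σ i = false → f (x i) < a - c)

def PatternsRealizable (x : ℕ → X) (a c : ℝ) (F : Finset ℕ) (R : Set ℕ) : Prop :=
  ∀ (σ : ℕ → Bool) (M : Set ℕ), M ⊆ R → M.Infinite →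
    ∃ f : X →L[ℝ] ℝ, ‖f‖ ≤ 1 ∧ Realizes x a c f F σ ∧ OscillatesOn x a c f M

namespace PatternsRealizable

variable {x : ℕ → X} {a c : ℝ} {F : Finset ℕ} {R : Set ℕ}

theorem exists_realizes_insert (h : PatternsRealizable x a c F R) {n : ℕ → ℕ}
    (hn : Function.Injective n) (hnR : ∀ k, n k ∈ R) {S : ℕ → Set ℕ}
    (hnS : ∀ j k, j < k → n k ∈ S j) (τ : ℕ → ℕ → Bool) :
    ∃ k, ∃ f : X →L[ℝ] ℝ, ‖f‖ ≤ 1 ∧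
      Realizes x a c f (insert (n k) F) (τ k) ∧ OscillatesOn x a c f (S k) := by
  obtain ⟨y, hy⟩ :=
    Finite.exists_infinite_fiber fun k => ((fun i : F => τ k i), τ k (n k))
  have hJ := Set.infinite_coe_iff.mp hy
  set J := (fun k => ((fun i : F => τ k i), τ k (n k))) ⁻¹' {y}
  obtain ⟨f, hf, hreal, hosc⟩ := h (fun i => if hi : i ∈ F then y.1 ⟨i, hi⟩ else y.2) (n '' J)
    (Set.image_subset_iff.mpr fun k _ => hnR k) (hJ.image hn.injOn)
  obtain ⟨k, hkJ, hside⟩ : ∃ k ∈ J, (y.2 = true → a + c < f (x (n k))) ∧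
      (y.2 = false → f (x (n k)) < a - c) := by
    cases hy2 : y.2
    · obtain ⟨_, ⟨⟨k, hk, rfl⟩, hlt⟩⟩ := hosc.2.nonempty
      exact ⟨k, hk, by simp [hlt]⟩
    · obtain ⟨_, ⟨⟨k, hk, rfl⟩, hlt⟩⟩ := hosc.1.nonempty
      exact ⟨k, hk, by simp [hlt]⟩
  simp only [J, Set.mem_preimage, Set.mem_singleton_iff] at hkJ
  refine ⟨k, f, hf, fun i hi => ?_, hosc.of_diff_finite ?_⟩
  · rcases Finset.mem_insert.mp hi with rfl | hiF
    · rw [← hkJ] at hside; exact hside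
    · have hσ := hreal i hiF
      dsimp only at hσ
      rwa [dif_pos hiF, ← hkJ] at hσ
  · refine ((Set.finite_Iic k).image n).subset ?_
    rintro _ ⟨⟨j, -, rfl⟩, hjS⟩
    exact ⟨j, not_lt.mp fun hkj => hjS (hnS k j hkj), rfl⟩

theorem exists_insert (hR : R.Infinite) (h : PatternsRealizable x a c F R) (b : ℕ) :
    ∃ n, b < n ∧ ∃ R' ⊆ R, R'.Infinite ∧ PatternsRealizable x a c (insert n F) R' := by
  by_contra! hcon
  have hbad : ∀ n, b < n → ∀ R' ⊆ R, R'.Infinite → ∃ (σ : ℕ → Bool) (M : Set ℕ), M ⊆ R' ∧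
      M.Infinite ∧ ∀ f : X →L[ℝ] ℝ, ‖f‖ ≤ 1 → Realizes x a c f (insert n F) σ →
        ¬ OscillatesOn x a c f M := by
    intro n hn R' hR'R hR'
    simpa [PatternsRealizable] using hcon n hn R' hR'R hR'
  -- otherwise a decreasing chain of sets `S k`, each bad for some pattern on `insert (n k) F`,
  -- contradicts `exists_realizes_insert`
  obtain ⟨s, -, hs⟩ := exists_seq_of_forall_exists
    (P := fun p : ℕ × Set ℕ × (ℕ → Bool) => p.2.1 ⊆ R ∧ p.2.1.Infinite)
    (r := fun p q => p.1 < q.1 ∧ q.1 ∈ p.2.1 ∧ q.2.1 ⊆ p.2.1 ∧ ∀ f : X →L[ℝ] ℝ, ‖f‖ ≤ 1 →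
      Realizes x a c f (insert q.1 F) q.2.2 → ¬ OscillatesOn x a c f q.2.1)
    (fun ⟨m, S, _⟩ ⟨hSR, hS⟩ => by
      obtain ⟨n, hnS, hn⟩ := (hS.sdiff (Set.finite_Iic (max m b))).nonempty
      have hn' : max m b < n := not_le.mp hn
      obtain ⟨σ, M, hMS, hM, hMbad⟩ := hbad n (by omega) S hSR hS
      exact ⟨(n, M, σ), ⟨hMS.trans hSR, hM⟩, by omega, hnS, hMS, hMbad⟩)
    (a₀ := (b, R, fun _ => true)) ⟨subset_rfl, hR⟩
  simp only [forall_and] at hs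
  obtain ⟨⟨hsR, -⟩, hlt, hmem, hsub, hnot⟩ := hs
  have hanti : Antitone fun k => (s k).2.1 := antitone_nat_of_succ_le hsub
  obtain ⟨k, f, hf, hreal, hosc⟩ := h.exists_realizes_insert (n := fun k => (s (k + 1)).1)
    (strictMono_nat_of_lt_succ fun k => hlt (k + 1)).injective (fun k => hsR k (hmem k))
    (S := fun k => (s (k + 1)).2.1) (fun j k hjk => hanti (Nat.succ_le_of_lt hjk) (hmem k))
    (fun k => (s (k + 1)).2.2)
  exact hnot k f hf hreal hosc

end PatternsRealizable

theorem exists_strictMono_forall_realizes {x : ℕ → X} {a c : ℝ} {Z : Set ℕ} (hZ : Z.Infinite)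
    (h : PatternsRealizable x a c ∅ Z) :
    ∃ e : ℕ → ℕ, StrictMono e ∧ ∀ (J : Finset ℕ) (σ : ℕ → Bool),
      ∃ f : X →L[ℝ] ℝ, ‖f‖ ≤ 1 ∧ Realizes (x ∘ e) a c f J σ := by
  obtain ⟨s, hs0, hs⟩ := exists_seq_of_forall_exists
    (P := fun p : ℕ × Finset ℕ × Set ℕ => p.2.2.Infinite ∧ PatternsRealizable x a c p.2.1 p.2.2)
    (r := fun p q => p.1 < q.1 ∧ q.2.1 = insert q.1 p.2.1)
    (fun ⟨m, F, R⟩ ⟨hR, hFR⟩ => by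
      obtain ⟨n, hmn, R', -, hR', hR'F⟩ := hFR.exists_insert hR m
      exact ⟨(n, insert n F, R'), ⟨hR', hR'F⟩, hmn, rfl⟩)
    (a₀ := (0, ∅, Z)) ⟨hZ, h⟩
  simp only [forall_and] at hs
  obtain ⟨⟨hsInf, hsReal⟩, hlt, hinsert⟩ := hs
  set e : ℕ → ℕ := fun k => (s (k + 1)).1
  have he : StrictMono e := strictMono_nat_of_lt_succ fun k => hlt (k + 1)
  have hF : ∀ k, (s k).2.1 = (Finset.range k).image e := by
    intro k
    induction k with
    | zero => simp [hs0]
    | succ k ih => rw [hinsert k, ih, Finset.range_add_one, Finset.image_insert]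
  refine ⟨e, he, fun J σ => ?_⟩
  set k := (J.sup id).succ
  obtain ⟨f, hf, hreal, -⟩ :=
    hsReal k (σ ∘ Function.invFun e) (s k).2.2 subset_rfl (hsInf k)
  refine ⟨f, hf, fun j hj => ?_⟩
  have hσ := hreal (e j) (hF k ▸ Finset.mem_image_of_mem e (Finset.subset_range_sup_succ J hj))
  simpa [Function.leftInverse_invFun he.injective j] using hσ

theorem mul_sum_abs_le_of_forall_realizes {w : ℕ → X} {a c : ℝ}
    (h : ∀ (J : Finset ℕ) (σ : ℕ → Bool), ∃ f : X →L[ℝ] ℝ, ‖f‖ ≤ 1 ∧ Realizes w a c f J σ)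
    (α : ℕ →₀ ℝ) : c * (∑ n ∈ α.support, |α n|) ≤ ‖∑ n ∈ α.support, α n • w n‖ := by
  set u := ∑ n ∈ α.support, α n • w n
  obtain ⟨f, hf, hfr⟩ := h α.support fun n => decide (0 < α n)
  obtain ⟨g, hg, hgr⟩ := h α.support fun n => decide (α n < 0)
  have hfu : ∑ n ∈ α.support, (a * α n + c * |α n|) ≤ f u := by
    simp only [u, map_sum, map_smul, smul_eq_mul]
    refine Finset.sum_le_sum fun n hn => le_mul_of_sign (fun hα => (hfr n hn).1 (by simpa using hα))
      fun hα => (hfr n hn).2 (by simpa using hα.le)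
  have hgu : g u ≤ ∑ n ∈ α.support, (a * α n - c * |α n|) := by
    simp only [u, map_sum, map_smul, smul_eq_mul]
    refine Finset.sum_le_sum fun n hn => ?_
    have := le_mul_of_sign (t := -α n) (y := g (w n))
      (fun hα => (hgr n hn).1 (by simpa using hα)) fun hα => (hgr n hn).2 (by simpa using hα.le)
    rw [abs_neg] at this
    linarith
  have hfn := (abs_le.mp (abs_apply_le_of_norm_le_one hf u)).2
  have hgn := (abs_le.mp (abs_apply_le_of_norm_le_one hg u)).1
  rw [Finset.sum_add_distrib, ← Finset.mul_sum, ← Finset.mul_sum] at hfu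
  rw [Finset.sum_sub_distrib, ← Finset.mul_sum, ← Finset.mul_sum] at hgu
  linarith

theorem exists_strictMono_mul_sum_abs_le {x : ℕ → X} {C δ₀ c : ℝ} (hC : ∀ n, ‖x n‖ ≤ C)
    (hδ : ∀ φ : ℕ → ℕ, StrictMono φ → δ₀ ≤ delta (x ∘ φ)) (hc : c < δ₀ / 2) :
    ∃ φ : ℕ → ℕ, StrictMono φ ∧ ∀ α : ℕ →₀ ℝ,
      c * (∑ n ∈ α.support, |α n|) ≤ ‖∑ n ∈ α.support, α n • (x ∘ φ) n‖ := by
  obtain ⟨a, Z, hZ, hZosc⟩ := exists_infinite_forall_subset_oscillatesOn hC hδ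
    (c := c + (δ₀ / 2 - c) / 2) (ε := (δ₀ / 2 - c) / 2) (by linarith) (by linarith)
  simp only [add_sub_cancel_right] at hZosc
  have hZreal : PatternsRealizable x a c ∅ Z := fun _ M hMZ hM =>
    let ⟨f, hf, hosc⟩ := hZosc M hMZ hM
    ⟨f, hf, fun i hi => absurd hi (Finset.notMem_empty i), hosc⟩
  obtain ⟨e, he, hreal⟩ := exists_strictMono_forall_realizes hZ hZreal
  exact ⟨e, he, mul_sum_abs_le_of_forall_realizes hreal⟩

theorem stmt17_general (x : ℕ → X) (hx : BoundedSeq x)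
    (hpos : 0 < tildeDelta x) :
    (∀ η > (0:ℝ), ∃ φ : ℕ → ℕ, StrictMono φ ∧
        tildeDelta x / 2 - η < epsJ (x ∘ φ)) ∧
      ∃ φ : ℕ → ℕ, StrictMono φ ∧ IsL1Seq (x ∘ φ) := by
  obtain ⟨C, hC⟩ := hx
  have hδ : ∀ φ : ℕ → ℕ, StrictMono φ → tildeDelta x ≤ delta (x ∘ φ) :=
    fun _ hφ => tildeDelta_le_delta_comp hC hφ
  refine ⟨fun η hη => ?_, ?_⟩
  · obtain ⟨φ, hφ, hl1⟩ :=
      exists_strictMono_mul_sum_abs_le hC hδ (c := tildeDelta x / 2 - η / 2) (by linarith)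
    exact ⟨φ, hφ, (sub_lt_sub_left (half_lt_self hη) _).trans_le
      (le_epsJ_of_forall_mul_le (fun n => hC (φ n)) hl1)⟩
  · obtain ⟨φ, hφ, hl1⟩ :=
      exists_strictMono_mul_sum_abs_le hC hδ (c := tildeDelta x / 4) (by linarith)
    exact ⟨φ, hφ, tildeDelta x / 4, by positivity, hl1⟩

theorem stmt17 [CompleteSpace X] (x : ℕ → X) (hx : BoundedSeq x)
    (hpos : 0 < tildeDelta x) :
    (∀ η > (0:ℝ), ∃ φ : ℕ → ℕ, StrictMono φ ∧
        tildeDelta x / 2 - η < epsJ (x ∘ φ)) ∧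
      ∃ φ : ℕ → ℕ, StrictMono φ ∧ IsL1Seq (x ∘ φ) :=
  stmt17_general x hx hpos
end
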